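/- arXiv:2203.10513 — 9 statements merged into one kernel-verified Lean document; each statement's English description precedes it below -/
import Mathlib

section
/- Let a, b, r ∈ ℂ with a ≠ 0, and let S, E, I, R : ℝ → ℂ be differentiable functions satisfying S'(t) = -r·S(t)·I(t), E'(t) = r·S(t)·I(t) - b·E(t), I'(t) = b·E(t) - a·I(t), R'(t) = a·I(t) for all t ∈ ℝ. Then the functions t ↦ S(t) + E(t) + I(t) + R(t) and t ↦ S(t)·exp(-(r/a)·(S(t) + E(t) + I(t))) are constant on ℝ. -/
/-! Adding the four equations gives `(S + E + I + R)' = 0`, and adding the first three gives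
`N' = -a I` for `N = S + E + I`. Hence `S' = (r / a) S N'`, so `exp (-(r / a) N)` is an
integrating factor: `(S exp (-(r / a) N))' = 0`. -/

theorem eq_of_forall_hasDerivAt_zero {F : Type*} [NormedAddCommGroup F] [NormedSpace ℝ F]
    {f : ℝ → F} (hf : ∀ t, HasDerivAt f 0 t) (t s : ℝ) : f t = f s :=
  is_const_of_deriv_eq_zero (fun x => (hf x).differentiableAt) (fun x => (hf x).deriv) t s

theorem hasDerivAt_mul_cexp_neg_mul_eq_zero {𝕜 : Type*} [NontriviallyNormedField 𝕜]
    [NormedAlgebra 𝕜 ℂ] {f u : 𝕜 → ℂ} {c u' : ℂ} {x : 𝕜}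
    (hf : HasDerivAt f (c * f x * u') x) (hu : HasDerivAt u u' x) :
    HasDerivAt (fun y => f y * Complex.exp (-c * u y)) 0 x :=
  (hf.mul (hu.const_mul (-c)).cexp).congr_deriv (by ring)

namespace SEIR

variable {a b r : ℂ} {S E I : ℝ → ℂ} {t : ℝ}

theorem hasDerivAt_S_add_E_add_I (hS : HasDerivAt S (-r * S t * I t) t)
    (hE : HasDerivAt E (r * S t * I t - b * E t) t) (hI : HasDerivAt I (b * E t - a * I t) t) :
    HasDerivAt (fun t => S t + E t + I t) (-a * I t) t :=
  ((hS.add hE).add hI).congr_deriv (by ring)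

theorem hasDerivAt_S_add_E_add_I_add_R {R : ℝ → ℂ} (hS : HasDerivAt S (-r * S t * I t) t)
    (hE : HasDerivAt E (r * S t * I t - b * E t) t) (hI : HasDerivAt I (b * E t - a * I t) t)
    (hR : HasDerivAt R (a * I t) t) :
    HasDerivAt (fun t => S t + E t + I t + R t) 0 t :=
  ((hasDerivAt_S_add_E_add_I hS hE hI).add hR).congr_deriv (by ring)

theorem hasDerivAt_S_mul_cexp_eq_zero (ha : a ≠ 0) (hS : HasDerivAt S (-r * S t * I t) t)
    (hE : HasDerivAt E (r * S t * I t - b * E t) t) (hI : HasDerivAt I (b * E t - a * I t) t) :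
    HasDerivAt (fun t => S t * Complex.exp (-(r / a) * (S t + E t + I t))) 0 t := by
  refine hasDerivAt_mul_cexp_neg_mul_eq_zero ?_ (hasDerivAt_S_add_E_add_I hS hE hI)
  convert hS using 1
  field_simp

end SEIR

/-- First integrals of the full SEIR model: `S+E+I+R` and
`S·exp(-(r/a)(S+E+I))` are constant along every solution. -/
theorem seir_first_integrals (a b r : ℂ) (ha : a ≠ 0)
    (S E I R : ℝ → ℂ)
    (hS : ∀ t : ℝ, HasDerivAt S (-r * S t * I t) t)
    (hE : ∀ t : ℝ, HasDerivAt E (r * S t * I t - b * E t) t)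
    (hI : ∀ t : ℝ, HasDerivAt I (b * E t - a * I t) t)
    (hR : ∀ t : ℝ, HasDerivAt R (a * I t) t) :
    (∀ t s : ℝ, S t + E t + I t + R t = S s + E s + I s + R s) ∧
    (∀ t s : ℝ,
      S t * Complex.exp (-(r / a) * (S t + E t + I t)) =
      S s * Complex.exp (-(r / a) * (S s + E s + I s))) :=
  ⟨eq_of_forall_hasDerivAt_zero fun t =>
      SEIR.hasDerivAt_S_add_E_add_I_add_R (hS t) (hE t) (hI t) (hR t),
    eq_of_forall_hasDerivAt_zero fun t =>
      SEIR.hasDerivAt_S_mul_cexp_eq_zero ha (hS t) (hE t) (hI t)⟩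
end

section
/- Let a, r ∈ ℂ with r ≠ 0 and set b = -a (i.e., a + b = 0). Let S, E, I : ℝ → ℂ be differentiable functions satisfying S'(t) = -r·S(t)·I(t), E'(t) = r·S(t)·I(t) - b·E(t), I'(t) = b·E(t) - a·I(t) for all t ∈ ℝ. Then the function t ↦ -(a/r)·S(t) + (1/2)·(S(t) + E(t) + I(t))² - (1/2)·I(t)² is constant on ℝ, i.e., F₃(S,E,I) = -(a/r)·S + (1/2)·(S+E+I)² - (1/2)·I² is an additional first integral of the reduced SEIR model when a + b = 0. -/
/-!
Along a solution the total population `N = S + E + I` satisfies `N' = -a I`, and a direct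
computation gives `d/dt F₃(S, E, I) = -(a + b) E I`, which vanishes when `a + b = 0`.
-/

def seirF₃ {𝔽 : Type*} [Field 𝔽] (a r S E I : 𝔽) : 𝔽 :=
  -(a / r) * S + (1 / 2) * (S + E + I) ^ 2 - (1 / 2) * I ^ 2

theorem hasDerivAt_seirF₃ {𝕜 𝔽 : Type*} [NontriviallyNormedField 𝕜] [NormedField 𝔽]
    [CharZero 𝔽] [NormedAlgebra 𝕜 𝔽] {a b r : 𝔽} (hr : r ≠ 0) {S E I : 𝕜 → 𝔽} {t : 𝕜}
    (hS : HasDerivAt S (-r * S t * I t) t)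
    (hE : HasDerivAt E (r * S t * I t - b * E t) t)
    (hI : HasDerivAt I (b * E t - a * I t) t) :
    HasDerivAt (fun t => seirF₃ a r (S t) (E t) (I t)) (-(a + b) * E t * I t) t := by
  have hN := (hS.add hE).add hI
  have hF := ((hS.const_mul (-(a / r))).add ((hN.pow 2).const_mul (1 / 2))).sub
    ((hI.pow 2).const_mul (1 / 2))
  refine hF.congr_deriv ?_
  simp only [Pi.add_apply]
  push_cast
  linear_combination (S t * I t) * div_mul_cancel₀ a hr

/-- When `b = -a` (i.e. `a + b = 0`), the reduced SEIR model has the additional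
first integral `F₃(S,E,I) = -(a/r)·S + (1/2)(S+E+I)² - (1/2)I²`. -/
theorem seir_extra_first_integral_of_a_add_b_eq_zero (a r : ℂ) (hr : r ≠ 0)
    (S E I : ℝ → ℂ)
    (hS : ∀ t : ℝ, HasDerivAt S (-r * S t * I t) t)
    (hE : ∀ t : ℝ, HasDerivAt E (r * S t * I t - (-a) * E t) t)
    (hI : ∀ t : ℝ, HasDerivAt I ((-a) * E t - a * I t) t) :
    ∀ t s : ℝ,
      -(a / r) * S t + (1 / 2) * (S t + E t + I t) ^ 2 - (1 / 2) * (I t) ^ 2 =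
      -(a / r) * S s + (1 / 2) * (S s + E s + I s) ^ 2 - (1 / 2) * (I s) ^ 2 := by
  have hF₃ : ∀ t, HasDerivAt (fun t => seirF₃ a r (S t) (E t) (I t)) 0 t := fun t => by
    simpa using hasDerivAt_seirF₃ hr (hS t) (hE t) (hI t)
  exact is_const_of_deriv_eq_zero (fun t => (hF₃ t).differentiableAt) fun t => (hF₃ t).deriv
end

section
/- Let γ, γ₁, γ₂, α₁, c, c' ∈ ℂ with γ ≠ 0, α₁ ≠ 0, c ≠ 1 and c' ≠ 1. Let M be the 6×6 complex matrix equal to the identity matrix except for the entries M(2,2) = c, M(3,2) = γ·(c−1), M(4,2) = γ₁·(c−1), M(5,2) = γ₂·(c−1), and let N be the 6×6 complex matrix equal to the identity matrix except for the entries N(2,1) = α₁·(c'−1), N(2,2) = c', N(3,2) = γ·(c'−1), N(4,2) = γ₁·(c'−1), N(5,2) = γ₂·(c'−1) (rows and columns indexed 1 through 6). Then M·N ≠ N·M. -/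
open Matrix

/-- The two families of matrices in the identity component of the differential
Galois group (case `a ≠ b`) do not commute. -/
theorem galois_matrices_not_commute (γ γ₁ γ₂ α₁ c c' : ℂ)
    (hγ : γ ≠ 0) (hα₁ : α₁ ≠ 0) (hc : c ≠ 1) (hc' : c' ≠ 1) :
    let M : Matrix (Fin 6) (Fin 6) ℂ :=
      !![1, 0, 0, 0, 0, 0;
         0, c, 0, 0, 0, 0;
         0, γ * (c - 1), 1, 0, 0, 0;
         0, γ₁ * (c - 1), 0, 1, 0, 0;
         0, γ₂ * (c - 1), 0, 0, 1, 0;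
         0, 0, 0, 0, 0, 1]
    let N : Matrix (Fin 6) (Fin 6) ℂ :=
      !![1, 0, 0, 0, 0, 0;
         α₁ * (c' - 1), c', 0, 0, 0, 0;
         0, γ * (c' - 1), 1, 0, 0, 0;
         0, γ₁ * (c' - 1), 0, 1, 0, 0;
         0, γ₂ * (c' - 1), 0, 0, 1, 0;
         0, 0, 0, 0, 0, 1]
    M * N ≠ N * M := by
  intro M N h
  have h20 := congrFun (congrFun h 2) 0
  rw [Matrix.mul_apply, Matrix.mul_apply, Fin.sum_univ_six, Fin.sum_univ_six] at h20
  have key : γ * (c - 1) * (α₁ * (c' - 1)) = 0 := by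
    have h20' : (0 * 1 + γ * (c - 1) * (α₁ * (c' - 1)) + 1 * 0 + 0 * 0 + 0 * 0 + 0 * 0 : ℂ)
        = 0 * 1 + γ * (c' - 1) * 0 + 1 * 0 + 0 * 0 + 0 * 0 + 0 * 0 := h20
    linear_combination h20'
  rcases mul_eq_zero.mp key with h1 | h1
  · rcases mul_eq_zero.mp h1 with h2 | h2
    · exact hγ h2
    · exact hc (by linear_combination h2)
  · rcases mul_eq_zero.mp h1 with h2 | h2
    · exact hα₁ h2
    · exact hc' (by linear_combination h2)
end

section
/- Let a, b, r ∈ ℂ with a ≠ 0. Define the vector fields f, g₁, g₂, g₃ : ℂ⁶ → ℂ⁶ by f(S,E,I,X,Y,Z) = (-r·S·I, r·S·I - b·E, b·E - a·I, -r·I·X, -(r·b/a)·E·Y, -(r²/a)·S·I·Z), g₁(S,E,I,X,Y,Z) = (0,0,0,X,0,0), g₂(S,E,I,X,Y,Z) = (0,0,0,0,Y,0), g₃(S,E,I,X,Y,Z) = (0,0,0,0,0,Z). Then the four vector fields f, g₁, g₂, g₃ pairwise commute: for every pair u, v among them and every x ∈ ℂ⁶, [u,v](x) := Dv(x)·u(x)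 − Du(x)·v(x) = 0, where Du(x) denotes the (Fréchet) derivative of u at x. -/
/-!
Each `gᵢ` is the linear field generating the scaling of one coordinate `X`, `Y` or `Z`, and every
field `u` of the family is equivariant under these scalings: `X`, `Y`, `Z` enter `u` at most through
one component, linearly. Along the line `x + t • gᵢ x` one thus has `u = u x + t • gᵢ (u x)`, and
along `x + t • u x` linearity gives `gᵢ = gᵢ x + t • gᵢ (u x)`; so both directional derivatives in
`[u, gᵢ](x)` equal `gᵢ (u x)` and cancel. The pairs `(f, gᵢ)` follow by antisymmetry.
-/

/-- The extended SEIR vector field on `ℂ⁶`. -/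
noncomputable def extSeirField (a b r : ℂ) (x : ℂ × ℂ × ℂ × ℂ × ℂ × ℂ) :
    ℂ × ℂ × ℂ × ℂ × ℂ × ℂ :=
  (-r * x.1 * x.2.2.1,
   r * x.1 * x.2.2.1 - b * x.2.1,
   b * x.2.1 - a * x.2.2.1,
   -r * x.2.2.1 * x.2.2.2.1,
   -(r * b / a) * x.2.1 * x.2.2.2.2.1,
   -(r ^ 2 / a) * x.1 * x.2.2.1 * x.2.2.2.2.2)

/-- `g₁(S,E,I,X,Y,Z) = (0,0,0,X,0,0)`. -/
def gX (x : ℂ × ℂ × ℂ × ℂ × ℂ × ℂ) : ℂ × ℂ × ℂ × ℂ × ℂ × ℂ :=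
  (0, 0, 0, x.2.2.2.1, 0, 0)

/-- `g₂(S,E,I,X,Y,Z) = (0,0,0,0,Y,0)`. -/
def gY (x : ℂ × ℂ × ℂ × ℂ × ℂ × ℂ) : ℂ × ℂ × ℂ × ℂ × ℂ × ℂ :=
  (0, 0, 0, 0, x.2.2.2.2.1, 0)

/-- `g₃(S,E,I,X,Y,Z) = (0,0,0,0,0,Z)`. -/
def gZ (x : ℂ × ℂ × ℂ × ℂ × ℂ × ℂ) : ℂ × ℂ × ℂ × ℂ × ℂ × ℂ :=
  (0, 0, 0, 0, 0, x.2.2.2.2.2)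

open VectorField

section LineDerivative

variable {𝕜 : Type*} [NontriviallyNormedField 𝕜]
  {E F : Type*} [NormedAddCommGroup E] [NormedSpace 𝕜 E] [NormedAddCommGroup F] [NormedSpace 𝕜 F]

theorem fderiv_apply_eq_of_forall_add_smul {u : E → F} {x v : E} {w : F}
    (hu : DifferentiableAt 𝕜 u x) (h : ∀ t : 𝕜, u (x + t • v) = u x + t • w) :
    fderiv 𝕜 u x v = w := by
  rw [← hu.lineDeriv_eq_fderiv, lineDeriv, funext h]
  simpa using ((hasDerivAt_id (0 : 𝕜)).smul_const w).const_add (u x) |>.deriv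

theorem lieBracket_eq_zero_of_forall_add_smul {u v : E → E} {x w : E}
    (hu : DifferentiableAt 𝕜 u x) (hv : DifferentiableAt 𝕜 v x)
    (huv : ∀ t : 𝕜, u (x + t • v x) = u x + t • w)
    (hvu : ∀ t : 𝕜, v (x + t • u x) = v x + t • w) :
    lieBracket 𝕜 u v x = 0 := by
  rw [lieBracket, fderiv_apply_eq_of_forall_add_smul hv hvu,
    fderiv_apply_eq_of_forall_add_smul hu huv, sub_self]

end LineDerivative

local notation "ℂ⁶" => ℂ × ℂ × ℂ × ℂ × ℂ × ℂ

theorem differentiable_of_mem_extSeir_family {a b r : ℂ} {u : ℂ⁶ → ℂ⁶}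
    (hu : u ∈ ({extSeirField a b r, gX, gY, gZ} : Set (ℂ⁶ → ℂ⁶))) :
    Differentiable ℂ u := by
  rcases hu with rfl | rfl | rfl | rfl <;>
    (first | unfold extSeirField | unfold gX | unfold gY | unfold gZ) <;> fun_prop

theorem map_add_smul_of_mem_scaling_fields {g : ℂ⁶ → ℂ⁶}
    (hg : g ∈ ({gX, gY, gZ} : Set (ℂ⁶ → ℂ⁶))) (x y : ℂ⁶) (t : ℂ) :
    g (x + t • y) = g x + t • g y := by
  rcases hg with rfl | rfl | rfl <;> simp [gX, gY, gZ]

theorem apply_add_smul_scaling_of_mem_extSeir_family {a b r : ℂ} {u g : ℂ⁶ → ℂ⁶}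
    (hu : u ∈ ({extSeirField a b r, gX, gY, gZ} : Set (ℂ⁶ → ℂ⁶)))
    (hg : g ∈ ({gX, gY, gZ} : Set (ℂ⁶ → ℂ⁶))) (x : ℂ⁶) (t : ℂ) :
    u (x + t • g x) = u x + t • g (u x) := by
  rcases hu with rfl | rfl | rfl | rfl <;> rcases hg with rfl | rfl | rfl <;>
    ext <;>
    simp only [extSeirField, gX, gY, gZ, Prod.fst_add, Prod.snd_add, Prod.smul_fst,
      Prod.smul_snd, smul_eq_mul] <;> ring

theorem lieBracket_scaling_eq_zero_of_mem_extSeir_family {a b r : ℂ} {u g : ℂ⁶ → ℂ⁶}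
    (hu : u ∈ ({extSeirField a b r, gX, gY, gZ} : Set (ℂ⁶ → ℂ⁶)))
    (hg : g ∈ ({gX, gY, gZ} : Set (ℂ⁶ → ℂ⁶))) (x : ℂ⁶) :
    lieBracket ℂ u g x = 0 :=
  lieBracket_eq_zero_of_forall_add_smul (differentiable_of_mem_extSeir_family hu x)
    (differentiable_of_mem_extSeir_family (a := a) (b := b) (r := r) (Or.inr hg) x)
    (apply_add_smul_scaling_of_mem_extSeir_family hu hg x)
    (fun t ↦ map_add_smul_of_mem_scaling_fields hg x (u x) t)

theorem extended_seir_commuting_fields_general (a b r : ℂ) :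
    ∀ u v : (ℂ × ℂ × ℂ × ℂ × ℂ × ℂ) → ℂ × ℂ × ℂ × ℂ × ℂ × ℂ,
      u ∈ ({extSeirField a b r, gX, gY, gZ} :
        Set ((ℂ × ℂ × ℂ × ℂ × ℂ × ℂ) → ℂ × ℂ × ℂ × ℂ × ℂ × ℂ)) →
      v ∈ ({extSeirField a b r, gX, gY, gZ} :
        Set ((ℂ × ℂ × ℂ × ℂ × ℂ × ℂ) → ℂ × ℂ × ℂ × ℂ × ℂ × ℂ)) →
      ∀ x : ℂ × ℂ × ℂ × ℂ × ℂ × ℂ,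
        fderiv ℂ v x (u x) - fderiv ℂ u x (v x) = 0 := by
  intro u v hu hv x
  change lieBracket ℂ u v x = 0
  rcases hv with rfl | hv
  · rcases hu with rfl | hu
    · exact congrFun lieBracket_self x
    · rw [lieBracket_swap, lieBracket_scaling_eq_zero_of_mem_extSeir_family (Or.inl rfl) hu,
        neg_zero]
  · exact lieBracket_scaling_eq_zero_of_mem_extSeir_family hu hv x

/-- The extended SEIR vector field and the three vector fields `g₁, g₂, g₃`
pairwise commute under the Lie bracket `[u,v](x) = Dv(x)·u(x) − Du(x)·v(x)`. -/
theorem extended_seir_commuting_fields (a b r : ℂ) (ha : a ≠ 0) :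
    ∀ u v : (ℂ × ℂ × ℂ × ℂ × ℂ × ℂ) → ℂ × ℂ × ℂ × ℂ × ℂ × ℂ,
      u ∈ ({extSeirField a b r, gX, gY, gZ} :
        Set ((ℂ × ℂ × ℂ × ℂ × ℂ × ℂ) → ℂ × ℂ × ℂ × ℂ × ℂ × ℂ)) →
      v ∈ ({extSeirField a b r, gX, gY, gZ} :
        Set ((ℂ × ℂ × ℂ × ℂ × ℂ × ℂ) → ℂ × ℂ × ℂ × ℂ × ℂ × ℂ)) →
      ∀ x : ℂ × ℂ × ℂ × ℂ × ℂ × ℂ,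
        fderiv ℂ v x (u x) - fderiv ℂ u x (v x) = 0 :=
  extended_seir_commuting_fields_general a b r
end

section
/- Let a, b, r, C₂ ∈ ℂ with a ≠ 0. Set Ī(t) = C₂·e^{-a·t}, X̄(t) = exp((r·C₂/a)·e^{-a·t}) and C₃ = exp(-r·C₂/a). Define δS(t) = C₃·X̄(t), δE(t) = r·C₂·C₃·e^{-b·t}·∫₀ᵗ e^{-(a-b)·τ}·X̄(τ) dτ, δI(t) = b·e^{-a·t}·∫₀ᵗ δE(τ)·e^{a·τ} dτ, δX(t) = -r·X̄(t)·∫₀ᵗ δI(τ) dτ, δY(t) = -(r·b/a)·∫₀ᵗ δE(τ) dτ, δZ(t) = -(r²·C₂·C₃/a)·∫₀ᵗ e^{-a·τ}·X̄(τ) dτ. Then (δS, δE, δI, δX, δY, δZ) is a solution of the variational equation δS' = -r·Ī(t)·δS, δE' = r·Ī(t)·δS - b·δE, δI' = b·δE - a·δI, δX' = -r·X̄(t)·δI - r·Ī(t)·δX, δY' = -(r·b/a)·δE, δZ' = -(r²/a)·Ī(t)·δS on ℝ, with initial value (δS(0), δE(0), δI(0), δX(0), δY(0), δZ(0)) = (1,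 0, 0, 0, 0, 0). -/
open MeasureTheory

/-- `Ī(t) = C₂·e^{-a t}`. -/
noncomputable def Ibar (a C₂ : ℂ) (t : ℝ) : ℂ := C₂ * Complex.exp (-a * t)

/-- `X̄(t) = exp((r C₂ / a)·e^{-a t})`. -/
noncomputable def Xbar (a r C₂ : ℂ) (t : ℝ) : ℂ :=
  Complex.exp (r * C₂ / a * Complex.exp (-a * t))

/-- `C₃ = exp(-r C₂ / a)`. -/
noncomputable def C₃const (a r C₂ : ℂ) : ℂ := Complex.exp (-(r * C₂) / a)

/-- `δS(t) = C₃ X̄(t)`. -/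
noncomputable def dS (a r C₂ : ℂ) (t : ℝ) : ℂ := C₃const a r C₂ * Xbar a r C₂ t

/-- `δE(t) = r C₂ C₃ e^{-b t} ∫₀ᵗ e^{-(a-b)τ} X̄(τ) dτ`. -/
noncomputable def dE (a b r C₂ : ℂ) (t : ℝ) : ℂ :=
  r * C₂ * C₃const a r C₂ * Complex.exp (-b * t) *
    ∫ τ in (0 : ℝ)..t, Complex.exp (-(a - b) * τ) * Xbar a r C₂ τ

/-- `δI(t) = b e^{-a t} ∫₀ᵗ δE(τ) e^{a τ} dτ`. -/
noncomputable def dI (a b r C₂ : ℂ) (t : ℝ) : ℂ :=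
  b * Complex.exp (-a * t) * ∫ τ in (0 : ℝ)..t, dE a b r C₂ τ * Complex.exp (a * τ)

/-- `δX(t) = -r X̄(t) ∫₀ᵗ δI(τ) dτ`. -/
noncomputable def dX (a b r C₂ : ℂ) (t : ℝ) : ℂ :=
  -r * Xbar a r C₂ t * ∫ τ in (0 : ℝ)..t, dI a b r C₂ τ

/-- `δY(t) = -(r b / a) ∫₀ᵗ δE(τ) dτ`. -/
noncomputable def dY (a b r C₂ : ℂ) (t : ℝ) : ℂ :=
  -(r * b / a) * ∫ τ in (0 : ℝ)..t, dE a b r C₂ τ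

/-- `δZ(t) = -(r² C₂ C₃ / a) ∫₀ᵗ e^{-a τ} X̄(τ) dτ`. -/
noncomputable def dZ (a r C₂ : ℂ) (t : ℝ) : ℂ :=
  -(r ^ 2 * C₂ * C₃const a r C₂ / a) *
    ∫ τ in (0 : ℝ)..t, Complex.exp (-a * τ) * Xbar a r C₂ τ

/-!
The components are built from `X̄`, exponentials and primitives `∫₀ᵗ g` of continuous
functions, so each derivative follows from the fundamental theorem of calculus and the
product rule. Beyond that only `X̄' = -r Ī X̄` is needed (chain rule for
`exp ((r C₂ / a) e^{-a t})`, where `a ≠ 0` cancels), together with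
`e^{-b t} e^{-(a-b) t} = e^{-a t}` for `δE` and `e^{-a t} e^{a t} = 1` for `δI`.
At `t = 0` all integrals vanish and `δS(0) = C₃ exp (r C₂ / a) = 1`.
-/

open Complex

lemma hasDerivAt_cexp_const_mul_ofReal (k : ℂ) (t : ℝ) :
    HasDerivAt (fun u : ℝ => exp (k * u)) (k * exp (k * t)) t := by
  simpa [mul_comm] using ((hasDerivAt_id t).ofReal_comp.const_mul k).cexp

lemma hasDerivAt_const_mul_cexp_mul_primitive {g : ℝ → ℂ} (hg : Continuous g) (c k : ℂ)
    (s t : ℝ) :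
    HasDerivAt (fun u : ℝ => c * exp (k * u) * ∫ τ in s..u, g τ)
      (k * (c * exp (k * t) * ∫ τ in s..t, g τ) + c * exp (k * t) * g t) t := by
  have h := ((hasDerivAt_cexp_const_mul_ofReal k t).const_mul c).mul
    ((hg.integral_hasStrictDerivAt s t).hasDerivAt)
  exact h.congr_deriv (by ring)

section VariationalEquation

variable {a b r C₂ : ℂ}

lemma continuous_Xbar : Continuous (Xbar a r C₂) := by
  unfold Xbar
  fun_prop

lemma continuous_dE : Continuous (dE a b r C₂) := by
  have hX : Continuous (Xbar a r C₂) := continuous_Xbar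
  unfold dE
  exact (by fun_prop : Continuous fun u : ℝ => r * C₂ * C₃const a r C₂ * exp (-b * u)).mul
    (intervalIntegral.differentiable_integral_of_continuous (by fun_prop)).continuous

lemma continuous_dI : Continuous (dI a b r C₂) := by
  have hE : Continuous (dE a b r C₂) := continuous_dE
  unfold dI
  exact (by fun_prop : Continuous fun u : ℝ => b * exp (-a * u)).mul
    (intervalIntegral.differentiable_integral_of_continuous (by fun_prop)).continuous

lemma hasDerivAt_Xbar (ha : a ≠ 0) (t : ℝ) :
    HasDerivAt (Xbar a r C₂) (-r * Ibar a C₂ t * Xbar a r C₂ t) t := by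
  have h := ((hasDerivAt_cexp_const_mul_ofReal (-a) t).const_mul (r * C₂ / a)).cexp
  refine h.congr_deriv ?_
  unfold Xbar Ibar
  field_simp

lemma hasDerivAt_dS (ha : a ≠ 0) (t : ℝ) :
    HasDerivAt (dS a r C₂) (-r * Ibar a C₂ t * dS a r C₂ t) t :=
  ((hasDerivAt_Xbar ha t).const_mul (C₃const a r C₂)).congr_deriv (by unfold dS; ring)

lemma hasDerivAt_dE (t : ℝ) :
    HasDerivAt (dE a b r C₂) (r * Ibar a C₂ t * dS a r C₂ t - b * dE a b r C₂ t) t := by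
  have hg : Continuous fun τ : ℝ => exp (-(a - b) * τ) * Xbar a r C₂ τ :=
    (continuous_exp.comp (by fun_prop)).mul continuous_Xbar
  have h := hasDerivAt_const_mul_cexp_mul_primitive hg (r * C₂ * C₃const a r C₂) (-b) 0 t
  have hexp : exp (-b * t) * exp (-(a - b) * t) = exp (-a * t) := by
    rw [← exp_add]
    ring_nf
  refine h.congr_deriv ?_
  unfold dE dS Ibar
  linear_combination (r * C₂ * C₃const a r C₂ * Xbar a r C₂ t) * hexp

lemma hasDerivAt_dI (t : ℝ) :
    HasDerivAt (dI a b r C₂) (b * dE a b r C₂ t - a * dI a b r C₂ t) t := by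
  have hg : Continuous fun τ : ℝ => dE a b r C₂ τ * exp (a * τ) :=
    continuous_dE.mul (continuous_exp.comp (by fun_prop))
  have h := hasDerivAt_const_mul_cexp_mul_primitive hg b (-a) 0 t
  have hexp : exp (-a * t) * exp (a * t) = 1 := by
    rw [← exp_add, neg_mul, neg_add_cancel, exp_zero]
  refine h.congr_deriv ?_
  unfold dI
  linear_combination (b * dE a b r C₂ t) * hexp

lemma hasDerivAt_dX (ha : a ≠ 0) (t : ℝ) :
    HasDerivAt (dX a b r C₂)
      (-r * Xbar a r C₂ t * dI a b r C₂ t - r * Ibar a C₂ t * dX a b r C₂ t) t :=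
  (((hasDerivAt_Xbar ha t).const_mul (-r)).mul
    ((continuous_dI.integral_hasStrictDerivAt 0 t).hasDerivAt)).congr_deriv
    (by unfold dX; ring)

lemma hasDerivAt_dY (t : ℝ) :
    HasDerivAt (dY a b r C₂) (-(r * b / a) * dE a b r C₂ t) t :=
  (continuous_dE.integral_hasStrictDerivAt 0 t).hasDerivAt.const_mul _

lemma hasDerivAt_dZ (t : ℝ) :
    HasDerivAt (dZ a r C₂) (-(r ^ 2 / a) * Ibar a C₂ t * dS a r C₂ t) t := by
  have hg : Continuous fun τ : ℝ => exp (-a * τ) * Xbar a r C₂ τ :=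
    (continuous_exp.comp (by fun_prop)).mul continuous_Xbar
  refine ((hg.integral_hasStrictDerivAt 0 t).hasDerivAt.const_mul _).congr_deriv ?_
  unfold Ibar dS
  ring

lemma dS_zero : dS a r C₂ 0 = 1 := by
  unfold dS Xbar C₃const
  rw [← exp_add]
  simp [neg_div]

end VariationalEquation

/-- The tuple `(δS, δE, δI, δX, δY, δZ)` solves the variational equation of the
extended SEIR system along the particular solution `(0,0,Ī,X̄,1,1)`, with
initial value `(1,0,0,0,0,0)`. -/
theorem variational_solution_one (a b r C₂ : ℂ) (ha : a ≠ 0) :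
    (∀ t : ℝ,
      HasDerivAt (dS a r C₂) (-r * Ibar a C₂ t * dS a r C₂ t) t ∧
      HasDerivAt (dE a b r C₂) (r * Ibar a C₂ t * dS a r C₂ t - b * dE a b r C₂ t) t ∧
      HasDerivAt (dI a b r C₂) (b * dE a b r C₂ t - a * dI a b r C₂ t) t ∧
      HasDerivAt (dX a b r C₂)
        (-r * Xbar a r C₂ t * dI a b r C₂ t - r * Ibar a C₂ t * dX a b r C₂ t) t ∧
      HasDerivAt (dY a b r C₂) (-(r * b / a) * dE a b r C₂ t) t ∧
      HasDerivAt (dZ a r C₂) (-(r ^ 2 / a) * Ibar a C₂ t * dS a r C₂ t) t) ∧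
    dS a r C₂ 0 = 1 ∧ dE a b r C₂ 0 = 0 ∧ dI a b r C₂ 0 = 0 ∧
    dX a b r C₂ 0 = 0 ∧ dY a b r C₂ 0 = 0 ∧ dZ a r C₂ 0 = 0 := by
  refine ⟨fun t => ⟨hasDerivAt_dS ha t, hasDerivAt_dE t, hasDerivAt_dI t, hasDerivAt_dX ha t,
    hasDerivAt_dY t, hasDerivAt_dZ t⟩, dS_zero, ?_, ?_, ?_, ?_, ?_⟩ <;>
  simp [dE, dI, dX, dY, dZ]
end

section
/- Let β ∈ ℕ with β ≥ 1. Then there do not exist polynomials p, q ∈ ℂ[X] with q ≠ 0 such that for every z ∈ ℂ with z ≠ 0 and q(z) ≠ 0, the function w ↦ p(w)/q(w) is differentiable at z with derivative satisfying (p/q)'(z) − p(z)/q(z) = z^{−β}. Equivalently, there is no rational function q ∈ ℂ(x) with q' − q = x^{−β}, i.e., ∫ x^{−β}·e^{−x} dx cannot be written as q(x)·e^{−x} with q rational. -/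
/-!
If `p / q` is in lowest terms and `(p / q)' - p / q = X ^ (-β)`, clearing denominators gives
`X ^ β * (p' q - p q' - p q) = q ^ 2`, hence `q ∣ X ^ β * q'`. At a root of `q` of multiplicity `k`,
`q'` vanishes to order exactly `k - 1`, so every root of `q` is `0` and `q = a Xⁿ`. The identity then
reads `X ^ β * (X (p' - p) - n p) = a X ^ (n + 1)`. The left side has degree `β + deg p + 1`, which
forces `β ≤ n`; comparing constant terms then gives `X ∣ p`, although `p` is coprime to `Xⁿ`, `n ≥ 1`.
-/

open Polynomial

section

variable {K : Type*} [Field K]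

/-- `p / q` solves `y' - y = X ^ (-β)`, with the denominators `X ^ β * q ^ 2` cleared. -/
def IsRischSolution (β : ℕ) (p q : K[X]) : Prop :=
  X ^ β * (derivative p * q - p * derivative q - p * q) = q ^ 2

theorem isRischSolution_mul_iff {β : ℕ} {g : K[X]} (hg : g ≠ 0) (p q : K[X]) :
    IsRischSolution β (g * p) (g * q) ↔ IsRischSolution β p q := by
  have expand : X ^ β * (derivative (g * p) * (g * q) - g * p * derivative (g * q) -
      g * p * (g * q)) = g ^ 2 * (X ^ β * (derivative p * q - p * derivative q - p * q)) := by
    simp only [derivative_mul]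
    ring
  rw [IsRischSolution, IsRischSolution, expand, mul_pow, mul_right_inj' (pow_ne_zero 2 hg)]

theorem IsRischSolution.dvd_X_pow_mul_derivative {β : ℕ} {p q : K[X]}
    (h : IsRischSolution β p q) (hco : IsCoprime p q) : q ∣ X ^ β * derivative q := by
  refine hco.symm.dvd_of_dvd_mul_right ⟨X ^ β * (derivative p - p) - q, ?_⟩
  rw [IsRischSolution] at h
  linear_combination -h

theorem Polynomial.isRoot_of_dvd_mul_derivative [CharZero K] {q r : K[X]} (hq : q ≠ 0)
    (hdvd : q ∣ r * derivative q) {c : K} (hc : q.IsRoot c) : r.IsRoot c := by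
  by_contra hr
  have hr0 : r ≠ 0 := by rintro rfl; exact hr (by simp)
  have hq' : derivative q ≠ 0 := by
    intro h0
    obtain ⟨a, rfl⟩ := natDegree_eq_zero.mp (derivative_eq_zero.1 h0)
    simp_all
  have hle := rootMultiplicity_le_rootMultiplicity_of_dvd (mul_ne_zero hr0 hq') hdvd c
  rw [rootMultiplicity_mul (mul_ne_zero hr0 hq'), rootMultiplicity_eq_zero hr,
    derivative_rootMultiplicity_of_root hc] at hle
  have := (rootMultiplicity_pos hq).2 hc
  omega

theorem Polynomial.X_mul_derivative_C_mul_X_pow {R : Type*} [CommSemiring R] (a : R) (n : ℕ) :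
    X * derivative (C a * X ^ n) = C (n : R) * (C a * X ^ n) := by
  rcases n with _ | n
  · simp
  · simp only [derivative_C_mul_X_pow, Nat.add_sub_cancel, map_mul]
    ring

theorem Polynomial.eq_C_leadingCoeff_mul_X_pow_of_isRoot [IsAlgClosed K] {q : K[X]}
    (hroots : ∀ c, q.IsRoot c → c = 0) : q = C q.leadingCoeff * X ^ q.natDegree := by
  by_cases hq : q = 0
  · simp [hq]
  have hrep : q.roots = Multiset.replicate q.natDegree 0 := by
    rw [← IsAlgClosed.card_roots_eq_natDegree, Multiset.eq_replicate_card]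
    exact fun c hc => hroots c (isRoot_of_mem_roots hc)
  conv_lhs =>
    rw [← C_leadingCoeff_mul_prod_multiset_X_sub_C (IsAlgClosed.card_roots_eq_natDegree (p := q))]
  simp [hrep]

theorem not_isRischSolution_C_mul_X_pow [CharZero K] {β n : ℕ} (hβ : 1 ≤ β) {a : K} (ha : a ≠ 0)
    {p : K[X]} (hco : IsCoprime p (X ^ n))
    (h : X ^ β * (X * (derivative p - p) - C (n : K) * p) = C a * X ^ (n + 1)) : False := by
  have hp : p ≠ 0 := by
    rintro rfl
    simp [ha] at h
  have hcoeff : (X ^ β * (X * (derivative p - p) - C (n : K) * p)).coeff (p.natDegree + 1 + β) =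
      -p.leadingCoeff := by
    simp [coeff_X_pow_mul, coeff_X_mul, coeff_derivative, coeff_natDegree_succ_eq_zero]
  have hβn : β ≤ n := by
    have := le_natDegree_of_ne_zero (hcoeff ▸ neg_ne_zero.2 (leadingCoeff_ne_zero.2 hp))
    rw [h, natDegree_C_mul_X_pow _ _ ha] at this
    omega
  have hXB : X ∣ X * (derivative p - p) - C (n : K) * p := by
    refine (mul_dvd_mul_iff_left (pow_ne_zero β X_ne_zero)).1 ?_
    rw [h, ← pow_succ]
    exact (pow_dvd_pow X (by omega)).mul_left _
  have hn : n ≠ 0 := by omega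
  have hXp : X ∣ p := by
    refine (isUnit_C.2 (Nat.cast_ne_zero.2 hn).isUnit).dvd_mul_left.1 ?_
    simpa using dvd_sub (dvd_mul_right X (derivative p - p)) hXB
  exact not_isUnit_X (hco.isUnit_of_dvd' hXp (dvd_pow_self X hn))

theorem IsRischSolution.not_isCoprime [IsAlgClosed K] [CharZero K] {β : ℕ} (hβ : 1 ≤ β)
    {p q : K[X]} (hq : q ≠ 0) (h : IsRischSolution β p q) : ¬ IsCoprime p q := by
  intro hco
  have hroots : ∀ c, q.IsRoot c → c = 0 := fun c hc => by
    have := isRoot_of_dvd_mul_derivative hq (h.dvd_X_pow_mul_derivative hco) hc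
    rwa [IsRoot.def, eval_pow, eval_X, pow_eq_zero_iff (by omega)] at this
  have hmon := eq_C_leadingCoeff_mul_X_pow_of_isRoot hroots
  refine not_isRischSolution_C_mul_X_pow hβ (leadingCoeff_ne_zero.2 hq)
    (hmon ▸ hco).of_mul_right_right ?_
  apply mul_left_cancel₀ hq
  have hXq' : X * derivative q = C (q.natDegree : K) * q := by
    rw [hmon, X_mul_derivative_C_mul_X_pow, ← hmon]
  rw [IsRischSolution] at h
  linear_combination X * h + X ^ β * p * hXq' + X * q * hmon

theorem not_isRischSolution [IsAlgClosed K] [CharZero K] {β : ℕ} (hβ : 1 ≤ β)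
    {p q : K[X]} (hq : q ≠ 0) : ¬ IsRischSolution β p q := by
  intro h
  obtain ⟨q₀, p₀, g, hrel, rfl, rfl⟩ := UniqueFactorizationMonoid.exists_reduced_factors q hq p
  have hg : g ≠ 0 := left_ne_zero_of_mul hq
  rw [isRischSolution_mul_iff hg] at h
  exact h.not_isCoprime hβ (right_ne_zero_of_mul hq) (isRelPrime_iff_isCoprime.1 hrel.symm)

end

theorem isRischSolution_of_hasDerivAt {β : ℕ} {p q : ℂ[X]} (hq : q ≠ 0)
    (H : ∀ z : ℂ, z ≠ 0 → q.eval z ≠ 0 →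
      ∃ d : ℂ, HasDerivAt (fun w : ℂ => p.eval w / q.eval w) d z ∧
        d - p.eval z / q.eval z = z ^ (-(β : ℤ))) :
    IsRischSolution β p q := by
  refine eq_of_infinite_eval_eq _ _ <|
    ((Set.finite_singleton 0).union (finite_setOfPred_isRoot hq)).infinite_compl.mono ?_
  intro z hz
  simp only [Set.mem_compl_iff, Set.mem_union, Set.mem_singleton_iff, Set.mem_ofPred_eq, IsRoot.def,
    not_or] at hz
  obtain ⟨hz0, hqz⟩ := hz
  obtain ⟨d, hd, hrisch⟩ := H z hz0 hqz
  rw [hd.unique ((p.hasDerivAt z).div (q.hasDerivAt z) hqz), zpow_neg, zpow_natCast] at hrisch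
  show eval z (X ^ β * _) = eval z (q ^ 2)
  simp only [eval_mul, eval_pow, eval_X, eval_sub]
  field_simp at hrisch
  linear_combination hrisch

/-- The Risch differential equation `q' − q = x^{−β}` (with `β ∈ ℕ`, `β ≥ 1`)
has no rational solution; equivalently `∫ x^{−β} e^{−x} dx` is not of the form
`q(x) e^{−x}` with `q` rational. -/
theorem risch_equation_no_rational_solution (β : ℕ) (hβ : 1 ≤ β) :
    ¬ ∃ p q : Polynomial ℂ, q ≠ 0 ∧
      ∀ z : ℂ, z ≠ 0 → q.eval z ≠ 0 →
        ∃ d : ℂ, HasDerivAt (fun w : ℂ => p.eval w / q.eval w) d z ∧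
          d - p.eval z / q.eval z = z ^ (-(β : ℤ)) := by
  rintro ⟨p, q, hq, H⟩
  exact not_isRischSolution hβ hq (isRischSolution_of_hasDerivAt hq H)
end

section
/- Let μ ∈ ℂ with μ ∉ ℤ (i.e., μ ≠ n for every integer n). Then there do not exist polynomials p, q ∈ ℂ[X] with p ≠ 0 and q ≠ 0 such that for every z ∈ ℂ with z ≠ 0 and q(z) ≠ 0, the function w ↦ p(w)/q(w) is differentiable at z with z·(p/q)'(z) = μ·(p(z)/q(z)). Equivalently, the equation x·f' = μ·f has no nonzero rational solution f ∈ ℂ(x) when μ ∉ ℤ (the solutions are constant multiples of x^μ, which is not rational). -/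
/-!
If `f = p / q` solves `x f' = μ f`, clearing denominators gives the polynomial identity
`X (p' q - p q') = μ p q`. The Euler operator `X · d/dX` multiplies the coefficient of `X ^ n`
by `n`, so comparing coefficients in degree `deg p + deg q` yields `μ = deg p - deg q ∈ ℤ`.
-/

open Polynomial

namespace Polynomial

section Semiring

variable {R : Type*} [Semiring R]

theorem coeff_X_mul_derivative (p : R[X]) (n : ℕ) :
    (X * derivative p).coeff n = n * p.coeff n := by
  cases n with
  | zero => simp
  | succ n => rw [coeff_X_mul, coeff_derivative, ← Nat.cast_succ, Nat.cast_comm]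

theorem natDegree_X_mul_derivative_le (p : R[X]) : (X * derivative p).natDegree ≤ p.natDegree :=
  natDegree_le_iff_coeff_eq_zero.mpr fun n hn => by
    rw [coeff_X_mul_derivative, coeff_eq_zero_of_natDegree_lt (by exact_mod_cast hn), mul_zero]

end Semiring

theorem coeff_X_mul_wronskian_natDegree_add {R : Type*} [CommRing R] (p q : R[X]) :
    (X * (derivative p * q - p * derivative q)).coeff (p.natDegree + q.natDegree) =
      ((p.natDegree : R) - q.natDegree) * p.leadingCoeff * q.leadingCoeff := by
  rw [show X * (derivative p * q - p * derivative q) =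
      X * derivative p * q - p * (X * derivative q) by ring, coeff_sub,
    coeff_mul_add_eq_of_natDegree_le (natDegree_X_mul_derivative_le p) le_rfl,
    coeff_mul_add_eq_of_natDegree_le le_rfl (natDegree_X_mul_derivative_le q),
    coeff_X_mul_derivative, coeff_X_mul_derivative, leadingCoeff, leadingCoeff]
  ring

theorem eq_natDegree_sub_natDegree_of_X_mul_wronskian_eq {R : Type*} [CommRing R] [IsDomain R]
    {p q : R[X]} (hp : p ≠ 0) (hq : q ≠ 0) {μ : R}
    (h : X * (derivative p * q - p * derivative q) = C μ * (p * q)) :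
    μ = p.natDegree - q.natDegree := by
  have hcoeff := congrArg (coeff · (p.natDegree + q.natDegree)) h
  simp only [coeff_X_mul_wronskian_natDegree_add, coeff_C_mul, coeff_mul_degree_add_degree] at hcoeff
  have hlc : p.leadingCoeff * q.leadingCoeff ≠ 0 :=
    mul_ne_zero (leadingCoeff_ne_zero.mpr hp) (leadingCoeff_ne_zero.mpr hq)
  exact (mul_left_cancel₀ hlc (by linear_combination hcoeff)).symm

theorem X_mul_wronskian_eq_of_hasDerivAt {𝕜 : Type*} [NontriviallyNormedField 𝕜]
    {p q : 𝕜[X]} (hq : q ≠ 0) {μ : 𝕜}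
    (h : ∀ z : 𝕜, z ≠ 0 → q.eval z ≠ 0 →
      ∃ d : 𝕜, HasDerivAt (fun w : 𝕜 => p.eval w / q.eval w) d z ∧
        z * d = μ * (p.eval z / q.eval z)) :
    X * (derivative p * q - p * derivative q) = C μ * (p * q) := by
  refine eq_of_infinite_eval_eq _ _ <|
    (finite_setOfPred_isRoot (mul_ne_zero X_ne_zero hq)).infinite_compl.mono fun z hz => ?_
  simp only [Set.mem_compl_iff, Set.mem_ofPred_eq, IsRoot, eval_mul, eval_X, mul_eq_zero,
    not_or] at hz
  obtain ⟨d, hd, hzd⟩ := h z hz.1 hz.2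
  rw [hd.unique ((p.hasDerivAt z).div (q.hasDerivAt z) hz.2)] at hzd
  rw [← mul_div_assoc, ← mul_div_assoc, div_eq_div_iff (pow_ne_zero 2 hz.2) hz.2] at hzd
  simp only [Set.mem_ofPred_eq, eval_mul, eval_sub, eval_X, eval_C]
  exact mul_right_cancel₀ hz.2 (by linear_combination hzd)

end Polynomial

/-- For `μ ∉ ℤ`, the equation `x f' = μ f` has no nonzero rational solution
(the solutions are constant multiples of `x^μ`, which is not rational). -/
theorem xpow_mu_not_rational (μ : ℂ) (hμ : ∀ n : ℤ, (n : ℂ) ≠ μ) :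
    ¬ ∃ p q : Polynomial ℂ, p ≠ 0 ∧ q ≠ 0 ∧
      ∀ z : ℂ, z ≠ 0 → q.eval z ≠ 0 →
        ∃ d : ℂ, HasDerivAt (fun w : ℂ => p.eval w / q.eval w) d z ∧
          z * d = μ * (p.eval z / q.eval z) := by
  rintro ⟨p, q, hp, hq, h⟩
  have hμ_eq := eq_natDegree_sub_natDegree_of_X_mul_wronskian_eq hp hq
    (X_mul_wronskian_eq_of_hasDerivAt hq h)
  exact hμ (p.natDegree - q.natDegree) (by rw [hμ_eq]; push_cast; rfl)
end

section
/- Let μ ∈ ℂ and let k ∈ ℕ with k ≥ 1. Then there do not exist polynomials p, q ∈ ℂ[X] with p ≠ 0 and q ≠ 0 such that for every z ∈ ℂ with z ≠ 0 and q(z) ≠ 0, the function w ↦ p(w)/q(w) is differentiable at z with z·(p/q)'(z) = (μ + k·z)·(p(z)/q(z)). Equivalently, the equation x·f' = (μ + k·x)·f has no nonzero rational solution f ∈ ℂ(x) (the solutions are constant multiples of x^μ·e^{k·x}, which is not rational). -/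
/-!
Clearing denominators, `x (p/q)' = (μ + k x) (p/q)` becomes the polynomial identity
`X · W(q, p) = (k X + μ) · p q` with `W(q, p) = q p' - q' p` the Wronskian; it holds off the finite
zero set of `X q`, hence identically. But `deg W(q, p) < deg p + deg q`, so the left side has
degree below `1 + deg p + deg q`, which is the degree of the right side when `k ≠ 0`.
-/

open Polynomial

namespace Polynomial

theorem degree_X_mul_wronskian_lt_degree_mul {R : Type*} [CommRing R] [NoZeroDivisors R]
    {p q ℓ : R[X]} (hp : p ≠ 0) (hq : q ≠ 0) (hℓ : 1 ≤ ℓ.degree) :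
    (X * wronskian q p).degree < (ℓ * (p * q)).degree :=
  calc (X * wronskian q p).degree ≤ 1 + (wronskian q p).degree :=
        (degree_mul_le _ _).trans (add_le_add_left degree_X_le _)
    _ < 1 + (q.degree + p.degree) :=
        WithBot.add_lt_add_left (by simp) (degree_wronskian_lt_add hq hp)
    _ ≤ ℓ.degree + (p * q).degree := by rw [degree_mul, add_comm p.degree]; gcongr
    _ = (ℓ * (p * q)).degree := (degree_mul ..).symm

theorem hasDerivAt_eval_div_eval {𝕜 : Type*} [NontriviallyNormedField 𝕜] (p q : 𝕜[X]) {z : 𝕜}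
    (hq : q.eval z ≠ 0) :
    HasDerivAt (fun w ↦ p.eval w / q.eval w) ((wronskian q p).eval z / q.eval z ^ 2) z := by
  have hW : (wronskian q p).eval z =
      p.derivative.eval z * q.eval z - p.eval z * q.derivative.eval z := by
    rw [wronskian, eval_sub, eval_mul, eval_mul]
    ring
  rw [hW]
  exact (p.hasDerivAt z).fun_div (q.hasDerivAt z) hq

end Polynomial

/-- For `k ≥ 1`, the equation `x f' = (μ + k x) f` has no nonzero rational
solution (the solutions are constant multiples of `x^μ e^{k x}`, which is not
rational). -/
theorem xpow_mu_exp_kx_not_rational (μ : ℂ) (k : ℕ) (hk : 1 ≤ k) :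
    ¬ ∃ p q : Polynomial ℂ, p ≠ 0 ∧ q ≠ 0 ∧
      ∀ z : ℂ, z ≠ 0 → q.eval z ≠ 0 →
        ∃ d : ℂ, HasDerivAt (fun w : ℂ => p.eval w / q.eval w) d z ∧
          z * d = (μ + (k : ℂ) * z) * (p.eval z / q.eval z) := by
  rintro ⟨p, q, hp, hq, H⟩
  have hℓ : 1 ≤ (C (k : ℂ) * X + C μ).degree := by
    rw [degree_linear (by exact_mod_cast (by omega : k ≠ 0))]
  have hident : X * wronskian q p = (C (k : ℂ) * X + C μ) * (p * q) := by
    have hXq : X * q ≠ 0 := mul_ne_zero X_ne_zero hq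
    refine eq_of_infinite_eval_eq _ _
      ((finite_setOfPred_isRoot hXq).infinite_compl.mono fun z hz ↦ ?_)
    obtain ⟨hz, hqz⟩ : z ≠ 0 ∧ q.eval z ≠ 0 := by simpa [IsRoot] using hz
    obtain ⟨d, hd, hzd⟩ := H z hz hqz
    rw [hd.unique (hasDerivAt_eval_div_eval p q hqz)] at hzd
    simp only [Set.mem_ofPred_eq, eval_mul, eval_add, eval_X, eval_C]
    field_simp at hzd
    linear_combination hzd
  exact (degree_X_mul_wronskian_lt_degree_mul hp hq hℓ).ne (congrArg degree hident)
end

section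
/- Let a, b, c ∈ ℂ with a ≠ 0 and b/a ∉ ℚ, and let k ∈ ℕ with k ≥ 1. Then there do not exist polynomials P, Q ∈ ℂ[u, v] in two variables such that the function t ↦ Q(e^{-a·t}, exp(c·e^{-a·t})) is not identically zero on ℝ and e^{-k·b·t}·Q(e^{-a·t}, exp(c·e^{-a·t})) = P(e^{-a·t}, exp(c·e^{-a·t})) for all t ∈ ℝ. In other words, the function t ↦ e^{-k·b·t} does not belong to the field ℂ(e^{-a·t}, exp(c·e^{-a·t})) of rational expressions in e^{-a·t} and exp(c·e^{-a·t}). -/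
/-!
Both sides of the identity extend to entire functions of `t ∈ ℂ`, so by the identity theorem it
holds on all of `ℂ`. The right-hand side and the factor `Q(…)` depend on `t` only through
`e^{-a t}`, hence are periodic with period `ω = 2πi/a`; comparing the identity at `t₀` and
`t₀ + ω`, where `Q(…) ≠ 0`, gives `e^{-k b ω} = 1`, i.e. `k b / a ∈ ℤ`, so `b / a ∈ ℚ`.
-/

open Complex Function Filter Topology Set
open scoped Real

theorem Complex.eq_of_analyticOnNhd_of_forall_ofReal {E : Type*} [NormedAddCommGroup E]
    [NormedSpace ℂ E] {f g : ℂ → E} (hf : AnalyticOnNhd ℂ f univ) (hg : AnalyticOnNhd ℂ g univ)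
    (hfg : ∀ t : ℝ, f t = g t) : f = g := by
  have hreal : Tendsto ((↑) : ℝ → ℂ) (𝓝[≠] 0) (𝓝[≠] (0 : ℝ)) :=
    continuous_ofReal.continuousWithinAt.tendsto_nhdsWithin fun _ _ ↦ by simp_all
  exact hf.eq_of_frequently_eq hg (hreal.frequently (Frequently.of_forall hfg))

theorem Complex.periodic_exp_mul (a : ℂ) :
    Periodic (fun z ↦ exp (a * z)) (2 * π * I / a) := by
  simpa [div_eq_inv_mul] using exp_periodic.const_mul a

theorem Complex.exp_mul_eq_one_of_periodic {F G : ℂ → ℂ} {μ ω z₀ : ℂ} (hF : Periodic F ω)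
    (hG : Periodic G ω) (h : ∀ z, exp (μ * z) * F z = G z) (hz₀ : F z₀ ≠ 0) :
    exp (μ * ω) = 1 := by
  have hshift : exp (μ * z₀) * exp (μ * ω) * F z₀ = exp (μ * z₀) * F z₀ := calc
    _ = exp (μ * (z₀ + ω)) * F (z₀ + ω) := by rw [mul_add, exp_add, hF]
    _ = exp (μ * z₀) * F z₀ := by rw [h, hG, h]
  simpa [hz₀, exp_ne_zero] using hshift

theorem Complex.exists_ratCast_eq_div_of_exp_eq_one {a b : ℂ} {m : ℤ} (hm : m ≠ 0)
    (h : exp (m * b * (2 * π * I / a)) = 1) : ∃ q : ℚ, (q : ℂ) = b / a := by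
  obtain ⟨n, hn⟩ := exp_eq_one_iff.1 h
  have hmn : (m : ℂ) * (b / a) = n :=
    mul_right_cancel₀ two_pi_I_ne_zero (by rw [← hn]; ring)
  refine ⟨n / m, ?_⟩
  push_cast
  rw [← hmn, mul_div_cancel_left₀ _ (Int.cast_ne_zero.2 hm)]

theorem exp_kbt_not_in_field_general (a b c : ℂ)
    (hba : ∀ q : ℚ, (q : ℂ) ≠ b / a) (k : ℕ) (hk : 1 ≤ k) :
    ¬ ∃ P Q : MvPolynomial (Fin 2) ℂ,
      (∃ t : ℝ, MvPolynomial.eval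
          ![Complex.exp (-a * t), Complex.exp (c * Complex.exp (-a * t))] Q ≠ 0) ∧
      ∀ t : ℝ,
        Complex.exp (-(k : ℂ) * b * t) *
          MvPolynomial.eval
            ![Complex.exp (-a * t), Complex.exp (c * Complex.exp (-a * t))] Q =
        MvPolynomial.eval
          ![Complex.exp (-a * t), Complex.exp (c * Complex.exp (-a * t))] P := by
  rintro ⟨P, Q, ⟨t₀, hQ⟩, heq⟩
  set X : ℂ → Fin 2 → ℂ := fun z ↦ ![exp (-a * z), exp (c * exp (-a * z))]
  have hX : ∀ i, AnalyticOnNhd ℂ (X · i) univ := fun i ↦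
    analyticOnNhd_univ_iff_differentiable.2 <| by
      fin_cases i <;> simp only [Fin.zero_eta, Fin.mk_one, Matrix.cons_val_zero,
        Matrix.cons_val_one, Matrix.cons_val_fin_one, X] <;> fun_prop
  have hXper : Periodic X (2 * π * I / -a) :=
    (periodic_exp_mul (-a)).comp fun w ↦ ![w, exp (c * w)]
  have hev : ∀ R, AnalyticOnNhd ℂ (fun z ↦ MvPolynomial.eval (X z) R) univ := fun R ↦ by
    simp_rw [← MvPolynomial.coe_aeval_eq_eval]
    exact .aeval_mvPolynomial hX R
  have hext : ∀ z, exp (-(k : ℂ) * b * z) * MvPolynomial.eval (X z) Q =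
      MvPolynomial.eval (X z) P :=
    congrFun (eq_of_analyticOnNhd_of_forall_ofReal
      ((analyticOnNhd_univ_iff_differentiable.2 (by fun_prop)).mul (hev Q)) (hev P) heq)
  have hexp := exp_mul_eq_one_of_periodic (hXper.comp fun x ↦ MvPolynomial.eval x Q)
    (hXper.comp fun x ↦ MvPolynomial.eval x P) hext hQ
  obtain ⟨q, hq⟩ := exists_ratCast_eq_div_of_exp_eq_one (a := -a) (b := -b) (m := k)
    (by exact_mod_cast (by omega : k ≠ 0)) (by simpa [neg_mul, mul_neg] using hexp)
  exact hba q (by rw [hq, neg_div_neg_eq])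

/-- Lemma 4.1: when `b/a ∉ ℚ`, the exponential `e^{-k b t}` does not lie in
the field `ℂ(e^{-a t}, exp(c·e^{-a t}))`, i.e. it cannot be written as a ratio
of polynomial expressions in `e^{-a t}` and `exp(c·e^{-a t})`. -/
theorem exp_kbt_not_in_field (a b c : ℂ) (ha : a ≠ 0)
    (hba : ∀ q : ℚ, (q : ℂ) ≠ b / a) (k : ℕ) (hk : 1 ≤ k) :
    ¬ ∃ P Q : MvPolynomial (Fin 2) ℂ,
      (∃ t : ℝ, MvPolynomial.eval
          ![Complex.exp (-a * t), Complex.exp (c * Complex.exp (-a * t))] Q ≠ 0) ∧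
      ∀ t : ℝ,
        Complex.exp (-(k : ℂ) * b * t) *
          MvPolynomial.eval
            ![Complex.exp (-a * t), Complex.exp (c * Complex.exp (-a * t))] Q =
        MvPolynomial.eval
          ![Complex.exp (-a * t), Complex.exp (c * Complex.exp (-a * t))] P :=
  exp_kbt_not_in_field_general a b c hba k hk
end
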